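/- arXiv:1104.2444 — 2 statements merged into one kernel-verified Lean document; each statement's English description precedes it below -/
import Mathlib

section
/- Let P, N be binary relations on a type V with P⁺ ∘ N irreflexive. Let S ⊆ V and x ∈ V be such that x is not in the domain of P ∪ N (i.e., x is not the first component of any pair in P or N), and let V₀ = S × {x}. Then (P ∪ V₀)⁺ ∘ N is irreflexive. -/
/-- Since `x` has no outgoing `r`-edge, an `s`-edge can only be the last step of the path. -/
theorem Relation.TransGen.transGen_left_or_eq_of_sink {α : Type*} {r s : α → α → Prop} {x : α}
    (hs : ∀ a b, s a b → b = x) (hr : ∀ b, ¬r x b) {a b : α}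
    (h : Relation.TransGen (fun u v => r u v ∨ s u v) a b) :
    Relation.TransGen r a b ∨ b = x := by
  induction h with
  | single hab => exact hab.imp .single (hs _ _)
  | tail _ hbc ih =>
    rcases hbc with hbc | hbc
    · rcases ih with ih | rfl
      · exact .inl (ih.tail hbc)
      · exact absurd hbc (hr _)
    · exact .inr (hs _ _ hbc)

/-- If `P⁺ ∘ N` is irreflexive and `x` is not the first component of any pair
in `P` or `N`, then `(P ∪ (S × {x}))⁺ ∘ N` is irreflexive. -/
theorem irreflexive_transGen_union_comp {V : Type*} (P N : Set (V × V))
    (S : Set V) (x : V)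
    (hirr : ∀ a : V, ¬∃ b, Relation.TransGen (fun u v => (u, v) ∈ P) a b ∧ (b, a) ∈ N)
    (hx : ∀ y, (x, y) ∉ P ∧ (x, y) ∉ N) :
    ∀ a : V, ¬∃ b,
      Relation.TransGen (fun u v => (u, v) ∈ P ∨ (u, v) ∈ S ×ˢ ({x} : Set V)) a b ∧
        (b, a) ∈ N := by
  rintro a ⟨b, hab, hba⟩
  rcases hab.transGen_left_or_eq_of_sink (fun _ _ h => h.2) (fun y => (hx y).1) with hP | rfl
  · exact hirr a ⟨b, hP, hba⟩
  · exact (hx a).2 hba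
end

section
/- Let P, N be binary relations with P⁺ ∘ N irreflexive and P well-founded, and let x be an element not in the domain of P (not the first component of any P-pair). Let V₀ be any relation whose range is {x} (i.e., V₀ ⊆ V × {x}). Then P⁺ ∘ (N ∪ V₀) is irreflexive. -/
theorem Relation.not_transGen_of_forall_not_rel {α : Type*} {r : α → α → Prop} {a b : α}
    (ha : ∀ c, ¬r a c) : ¬TransGen r a b := fun hab =>
  let ⟨c, hac, _⟩ := TransGen.head'_iff.mp hab
  ha c hac

theorem irreflexive_comp_union_range_singleton_general {V : Type*} (P N V₀ : Set (V × V))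
    (x : V)
    (hirr : ∀ a : V, ¬∃ b, Relation.TransGen (fun u v => (u, v) ∈ P) a b ∧ (b, a) ∈ N)
    (hx : ∀ y, (x, y) ∉ P)
    (hV₀ : ∀ p ∈ V₀, p.2 = x) :
    ∀ a : V, ¬∃ b, Relation.TransGen (fun u v => (u, v) ∈ P) a b ∧
      ((b, a) ∈ N ∨ (b, a) ∈ V₀) := by
  rintro a ⟨b, hab, hN | hV⟩
  · exact hirr a ⟨b, hab, hN⟩
  · obtain rfl : a = x := hV₀ _ hV
    exact Relation.not_transGen_of_forall_not_rel hx hab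

/-- If `P` is well-founded, `P⁺ ∘ N` is irreflexive, `x` is not the source of
any `P`-edge, and the range of `V₀` is contained in `{x}`, then
`P⁺ ∘ (N ∪ V₀)` is irreflexive. -/
theorem irreflexive_comp_union_range_singleton {V : Type*} (P N V₀ : Set (V × V))
    (x : V)
    (hwf : WellFounded (fun a b => (a, b) ∈ P))
    (hirr : ∀ a : V, ¬∃ b, Relation.TransGen (fun u v => (u, v) ∈ P) a b ∧ (b, a) ∈ N)
    (hx : ∀ y, (x, y) ∉ P)
    (hV₀ : ∀ p ∈ V₀, p.2 = x) :
    ∀ a : V, ¬∃ b, Relation.TransGen (fun u v => (u, v) ∈ P) a b ∧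
      ((b, a) ∈ N ∨ (b, a) ∈ V₀) :=
  irreflexive_comp_union_range_singleton_general P N V₀ x hirr hx hV₀
end
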